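/- arXiv:2108.00031 — 5 statements merged into one kernel-verified Lean document; each statement's English description precedes it below -/
import Mathlib

section
/- Every tensor ψ ∈ (ℂ^d)^{⊗N} admits a representation as a matrix product state with open boundary conditions where the bond dimension m_i at each cut i equals the rank of ψ viewed as a d^i × d^{N-i} matrix. Consequently, the set of MPS with bond dimensions {m_i} coincides exactly with the set of tensors whose Schmidt ranks satisfy rank_i(ψ) ≤ m_i for all i. -/
/-- Partial matrix products of an open-boundary MPS: `mpsProd m d A n σ` is the ordered
product `A_0^{σ_0} A_1^{σ_1} ⋯ A_{n-1}^{σ_{n-1}}`, a matrix of size `m 0 × m n`. -/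
noncomputable def mpsProd (m : ℕ → ℕ) (d : ℕ)
    (A : ∀ i : ℕ, Fin d → Matrix (Fin (m i)) (Fin (m (i + 1))) ℂ) :
    ∀ n : ℕ, (Fin n → Fin d) → Matrix (Fin (m 0)) (Fin (m n)) ℂ
  | 0, _ => 1
  | n + 1, σ => mpsProd m d A n (fun i => σ i.castSucc) * A n (σ (Fin.last n))

/-- The coefficient of the MPS: for `m 0 = m N = 1` the product matrix is `1 × 1` and the
sum of its entries is the scalar `A_0^{σ_0} ⋯ A_{N-1}^{σ_{N-1}}`. -/
noncomputable def mpsCoeff (m : ℕ → ℕ) (d : ℕ)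
    (A : ∀ i : ℕ, Fin d → Matrix (Fin (m i)) (Fin (m (i + 1))) ℂ)
    (N : ℕ) (σ : Fin N → Fin d) : ℂ :=
  ∑ p, ∑ q, mpsProd m d A N σ p q

/-- The tensor `ψ ∈ (ℂ^d)^{⊗N}` reshaped as a `d^i × d^{N-i}` matrix across the cut
between sites `i` and `i+1`. -/
noncomputable def cutMatrix (N d i : ℕ) (hi : i ≤ N) (ψ : (Fin N → Fin d) → ℂ) :
    Matrix (Fin i → Fin d) (Fin (N - i) → Fin d) ℂ :=
  Matrix.of fun σA σB => ψ fun j => Fin.append σA σB (Fin.cast (by omega) j)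

/-!
Let `V_i` be the span of the rows of the `i`-th cut matrix of `ψ`, a space of functions of the
last `N - i` sites, so that `rank_i ψ = dim V_i`. Fixing the first of these sites maps `V_i`
into `V_{i+1}`. Take families `e_i` of `m_i` vectors spanning `V_i`, with `e_0 = ψ` and
`e_N = 1`, and let `A_i^s` hold the coefficients of the contracted vectors of `e_i` in `e_{i+1}`.
Then, by induction on `i`, row `σ` of the `i`-th cut matrix is `∑_q c_q e_i q` with
`c = (1, …, 1) A_0^{σ_0} ⋯ A_{i-1}^{σ_{i-1}}`, which for `i = N` is the MPS representation
of `ψ`.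
Conversely, for an MPS the same identity, propagated from `i = N` downwards, puts every row of
the `i`-th cut matrix in the span of `m_i` vectors, so `rank_i ψ ≤ m_i`.
-/

open Finset Submodule Set Module Matrix

theorem Submodule.exists_fin_span_range_eq {K V : Type*} [DivisionRing K] [AddCommGroup V]
    [Module K V] (W : Submodule K V) [FiniteDimensional K W] {n : ℕ}
    (h : finrank K W ≤ n) : ∃ v : Fin n → V, span K (range v) = W := by
  let b := Module.finBasis K W
  refine ⟨fun p => if hp : p.1 < finrank K W then b ⟨p, hp⟩ else 0, le_antisymm ?_ ?_⟩
  · rw [span_le]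
    rintro _ ⟨p, rfl⟩
    dsimp only
    split_ifs
    exacts [(b _).2, W.zero_mem]
  · conv_lhs => rw [← W.map_subtype_top, ← b.span_eq, map_span, ← range_comp]
    refine span_mono ?_
    rintro _ ⟨k, rfl⟩
    exact ⟨⟨k, k.2.trans_le h⟩, dif_pos k.2⟩

theorem Matrix.sum_vecMul_smul {ι κ R M : Type*} [Fintype ι] [Fintype κ] [Semiring R]
    [AddCommMonoid M] [Module R M] (c : ι → R) (A : Matrix ι κ R) (v : κ → M) :
    ∑ q, (c ᵥ* A) q • v q = ∑ p, c p • ∑ q, A p q • v q := by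
  simp only [vecMul, dotProduct, Finset.sum_smul, Finset.smul_sum, mul_smul]
  exact Finset.sum_comm

theorem Submodule.span_range_one_eq_top {K ι X : Type*} [Semiring K] [Nonempty ι]
    [Subsingleton X] : span K (range (1 : ι → X → K)) = ⊤ := by
  rw [eq_top_iff, Pi.one_def, range_const]
  intro v _
  rw [mem_span_singleton]
  rcases isEmpty_or_nonempty X with hX | ⟨⟨x⟩⟩
  · exact ⟨0, funext fun y => hX.elim y⟩
  · exact ⟨v x, funext fun y => by simp [Subsingleton.elim y x]⟩

namespace MPS

variable {N d : ℕ}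

def cutFun (ψ : (Fin N → Fin d) → ℂ) (i : ℕ) (σ : Fin i → Fin d)
    (τ : Fin (N - i) → Fin d) : ℂ :=
  ψ fun j => if h : j.1 < i then σ ⟨j, h⟩ else τ ⟨j - i, by omega⟩

noncomputable def cutSpan (ψ : (Fin N → Fin d) → ℂ) (i : ℕ) :
    Submodule ℂ ((Fin (N - i) → Fin d) → ℂ) :=
  span ℂ (range (cutFun ψ i))

theorem rank_cutMatrix {i : ℕ} (hi : i ≤ N) (ψ : (Fin N → Fin d) → ℂ) :
    (cutMatrix N d i hi ψ).rank = finrank ℂ (cutSpan ψ i) := by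
  have : cutMatrix N d i hi ψ = Matrix.of (cutFun ψ i) := by
    ext σ τ
    simp only [cutMatrix, cutFun, of_apply]
    congr 1
    funext j
    simp only [Fin.append, Fin.addCases, Fin.cast, Fin.castLT]
    split
    · rfl
    · simp [Fin.subNat]
  rw [this, rank_eq_finrank_span_row]
  rfl

def consAt (N n : ℕ) (s : Fin d) (τ : Fin (N - (n + 1)) → Fin d) : Fin (N - n) → Fin d :=
  fun j => if h : j.1 = 0 then s else τ ⟨j - 1, by omega⟩

theorem consAt_head_tail {n : ℕ} (hn : n < N) (τ : Fin (N - n) → Fin d) :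
    consAt N n (τ ⟨0, by omega⟩) (fun j => τ ⟨j + 1, by omega⟩) = τ := by
  funext j
  unfold consAt
  split_ifs with h
  · exact congrArg τ (Fin.ext h.symm)
  · exact congrArg τ (Fin.ext (by simp; omega))

/-- Fixes the first site to the right of the `n`-th cut to `s`. -/
noncomputable def contract (N n : ℕ) (s : Fin d) :
    ((Fin (N - n) → Fin d) → ℂ) →ₗ[ℂ] ((Fin (N - (n + 1)) → Fin d) → ℂ) :=
  LinearMap.funLeft ℂ ℂ (consAt N n s)

theorem contract_injective {n : ℕ} (hn : n < N) {u v : (Fin (N - n) → Fin d) → ℂ}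
    (h : ∀ s, contract N n s u = contract N n s v) : u = v := by
  funext τ
  rw [← consAt_head_tail hn τ]
  exact congrFun (h _) _

theorem contract_surjective {n : ℕ} (hn : n < N)
    (w : Fin d → (Fin (N - (n + 1)) → Fin d) → ℂ) :
    ∃ v, ∀ s, contract N n s v = w s := by
  refine ⟨fun τ => w (τ ⟨0, by omega⟩) fun j => τ ⟨j + 1, by omega⟩, fun s => ?_⟩
  funext τ
  simp [contract, LinearMap.funLeft_apply, consAt]

theorem contract_cutFun (ψ : (Fin N → Fin d) → ℂ) {n : ℕ} (σ : Fin (n + 1) → Fin d) :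
    contract N n (σ (Fin.last n)) (cutFun ψ n (Fin.init σ)) = cutFun ψ (n + 1) σ := by
  funext τ
  simp only [contract, LinearMap.funLeft_apply, cutFun, consAt, Fin.init]
  congr 1
  funext j
  rcases lt_trichotomy j.1 n with h | h | h
  · rw [dif_pos h, dif_pos (by omega)]
    rfl
  · rw [dif_neg (by omega), dif_pos (by omega), dif_pos (by omega)]
    exact congrArg σ (Fin.ext h.symm)
  · rw [dif_neg (by omega), dif_neg (by omega), dif_neg (by omega)]
    exact congrArg τ (Fin.ext (by simp; omega))

theorem contract_cutSpan_le (ψ : (Fin N → Fin d) → ℂ) (n : ℕ) (s : Fin d) :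
    (cutSpan ψ n).map (contract N n s) ≤ cutSpan ψ (n + 1) := by
  rw [cutSpan, map_span, span_le]
  rintro _ ⟨_, ⟨σ, rfl⟩, rfl⟩
  refine subset_span ⟨Fin.snoc σ s, ?_⟩
  rw [← contract_cutFun, Fin.snoc_last, Fin.init_snoc]

variable {m : ℕ → ℕ}

/-- The all-ones row `1` is the left boundary vector implicit in `mpsCoeff`. -/
def IsCutFactorization (ψ : (Fin N → Fin d) → ℂ)
    (A : ∀ i : ℕ, Fin d → Matrix (Fin (m i)) (Fin (m (i + 1))) ℂ)
    (n : ℕ) (R : Fin (m n) → (Fin (N - n) → Fin d) → ℂ) : Prop :=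
  ∀ σ, cutFun ψ n σ = ∑ q, (1 ᵥ* mpsProd m d A n σ) q • R q

variable {ψ : (Fin N → Fin d) → ℂ}
  {A : ∀ i : ℕ, Fin d → Matrix (Fin (m i)) (Fin (m (i + 1))) ℂ}

theorem isCutFactorization_zero_iff {R : Fin (m 0) → _} :
    IsCutFactorization ψ A 0 R ↔ ∀ σ, cutFun ψ 0 σ = ∑ q, R q := by
  simp [IsCutFactorization, mpsProd]

theorem isCutFactorization_last_iff :
    IsCutFactorization ψ A N 1 ↔ ∀ σ, ψ σ = mpsCoeff m d A N σ := by
  refine forall_congr' fun σ => ?_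
  have hψ : cutFun ψ N σ = fun _ => ψ σ := by
    funext τ
    exact congrArg ψ (funext fun j => dif_pos j.2)
  rw [hψ, funext_iff]
  simp [mpsCoeff, vecMul, dotProduct]
  rw [Finset.sum_comm]

theorem isCutFactorization_succ_iff {n : ℕ} (hn : n < N)
    {R : Fin (m n) → _} {R' : Fin (m (n + 1)) → _}
    (hA : ∀ s p, contract N n s (R p) = ∑ q, A n s p q • R' q) :
    IsCutFactorization ψ A (n + 1) R' ↔ IsCutFactorization ψ A n R := by
  have key : ∀ σ : Fin (n + 1) → Fin d, contract N n (σ (Fin.last n))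
      (∑ p, (1 ᵥ* mpsProd m d A n (Fin.init σ)) p • R p) =
        ∑ q, (1 ᵥ* mpsProd m d A (n + 1) σ) q • R' q := fun σ => by
    conv_rhs => rw [mpsProd, ← vecMul_vecMul, sum_vecMul_smul]
    simp only [map_sum, map_smul, hA]
    rfl
  constructor
  · intro h σ
    refine contract_injective hn fun s => ?_
    have hcut := contract_cutFun ψ (Fin.snoc σ s)
    have hkey := key (Fin.snoc σ s)
    rw [Fin.snoc_last, Fin.init_snoc] at hcut hkey
    rw [hcut, h, hkey]
  · intro h σ
    rw [← contract_cutFun, h, key]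

theorem exists_isCutFactorization_of_mps (hψ : ∀ σ, ψ σ = mpsCoeff m d A N σ)
    {n : ℕ} (hn : n ≤ N) :
    ∃ R, IsCutFactorization ψ A n R := by
  induction hn using Nat.decreasingInduction with
  | self => exact ⟨1, isCutFactorization_last_iff.2 hψ⟩
  | of_succ n hn ih =>
    obtain ⟨R', hR'⟩ := ih
    choose R hR using fun p => contract_surjective hn fun s => ∑ q, A n s p q • R' q
    exact ⟨R, (isCutFactorization_succ_iff hn fun s p => hR p s).1 hR'⟩

theorem finrank_cutSpan_le {n : ℕ} {R : Fin (m n) → _}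
    (h : IsCutFactorization ψ A n R) : finrank ℂ (cutSpan ψ n) ≤ m n :=
  calc finrank ℂ (cutSpan ψ n) ≤ finrank ℂ (span ℂ (range R)) := by
        refine Submodule.finrank_mono (span_le.2 ?_)
        rintro _ ⟨σ, rfl⟩
        rw [h σ]
        exact (mem_span_range_iff_exists_fun ℂ).2 ⟨_, rfl⟩
    _ ≤ m n := (finrank_range_le_card R).trans_eq (Fintype.card_fin _)

theorem exists_mps_of_frame (e : ∀ i, Fin (m i) → (Fin (N - i) → Fin d) → ℂ)
    (h0 : ∀ σ, cutFun ψ 0 σ = ∑ q, e 0 q) (hmem : ∀ i < N, ∀ p, e i p ∈ cutSpan ψ i)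
    (hspan : ∀ i, 0 < i → i ≤ N → cutSpan ψ i ≤ span ℂ (range (e i)))
    (hlast : e N = 1) :
    ∃ A : ∀ i : ℕ, Fin d → Matrix (Fin (m i)) (Fin (m (i + 1))) ℂ,
      ∀ σ, ψ σ = mpsCoeff m d A N σ := by
  have : ∀ i s p, ∃ c : Fin (m (i + 1)) → ℂ,
      i < N → contract N i s (e i p) = ∑ q, c q • e (i + 1) q := by
    intro i s p
    by_cases hi : i < N
    · obtain ⟨c, hc⟩ := (mem_span_range_iff_exists_fun ℂ).1 <|
        hspan (i + 1) i.succ_pos hi (contract_cutSpan_le ψ i s ⟨_, hmem i hi p, rfl⟩)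
      exact ⟨c, fun _ => hc.symm⟩
    · exact ⟨0, fun h => absurd h hi⟩
  choose c hc using this
  refine ⟨fun i s => Matrix.of (c i s), ?_⟩
  have hfac : ∀ n ≤ N, IsCutFactorization ψ (fun i s => Matrix.of (c i s)) n (e n) := by
    intro n hn
    induction n with
    | zero => exact isCutFactorization_zero_iff.2 h0
    | succ n ih =>
      exact (isCutFactorization_succ_iff hn fun s p => hc n s p hn).2 (ih (by omega))
  rw [← isCutFactorization_last_iff, ← hlast]
  exact hfac N le_rfl

theorem exists_mps_of_finrank_le (hN : 0 < N) (hm0 : m 0 = 1) (hmN : m N ≠ 0)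
    (h : ∀ i, 0 < i → i < N → finrank ℂ (cutSpan ψ i) ≤ m i) :
    ∃ A : ∀ i : ℕ, Fin d → Matrix (Fin (m i)) (Fin (m (i + 1))) ℂ,
      ∀ σ, ψ σ = mpsCoeff m d A N σ := by
  have : ∀ i, ∃ v : Fin (m i) → (Fin (N - i) → Fin d) → ℂ,
      (i = 0 → ∀ p σ, v p = cutFun ψ i σ) ∧
      (0 < i → i < N → span ℂ (range v) = cutSpan ψ i) ∧ (i = N → v = 1) := by
    intro i
    rcases Nat.eq_zero_or_pos i with rfl | hi0
    · exact ⟨fun _ => cutFun ψ 0 Fin.elim0, fun _ p σ => congrArg _ (Subsingleton.elim _ _),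
        fun h => absurd h (lt_irrefl 0), fun h => absurd h (by omega)⟩
    rcases lt_or_ge i N with hiN | hiN
    · obtain ⟨v, hv⟩ := (cutSpan ψ i).exists_fin_span_range_eq (h i hi0 hiN)
      exact ⟨v, fun h => absurd h (by omega), fun _ _ => hv, fun h => absurd h (by omega)⟩
    · exact ⟨1, fun h => absurd h (by omega), fun _ h => absurd h (by omega), fun _ => rfl⟩
  choose e he0 hspan hlast using this
  refine exists_mps_of_frame e (fun σ => ?_) (fun i hi p => ?_) (fun i hi0 hi => ?_)
    (hlast N rfl)
  · simp [he0 0 rfl _ σ, hm0]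
  · rcases Nat.eq_zero_or_pos i with rfl | hi0
    · rw [he0 0 rfl p Fin.elim0]
      exact subset_span ⟨_, rfl⟩
    · rw [← hspan i hi0 hi]
      exact subset_span ⟨p, rfl⟩
  · rcases hi.lt_or_eq with hi | rfl
    · rw [hspan i hi0 hi]
    · have : Nonempty (Fin (m i)) := ⟨⟨0, Nat.pos_of_ne_zero hmN⟩⟩
      have : Subsingleton (Fin (i - i) → Fin d) :=
        ⟨fun _ _ => funext fun j => absurd j.2 (by omega)⟩
      rw [hlast i rfl, span_range_one_eq_top]
      exact le_top

end MPS

/-- (1) Every tensor `ψ ∈ (ℂ^d)^{⊗N}` has an OBC-MPS representation whose bond dimension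
at each cut `i` equals the Schmidt rank of `ψ` across that cut.  (2) Consequently, the
set of MPS with bond dimensions `{m i}` is exactly the set of tensors all of whose
Schmidt ranks satisfy `rank_i ψ ≤ m i`. -/
theorem mps_exact_representation_and_set_eq (N d : ℕ) (hN : 1 ≤ N) :
    (∀ ψ : (Fin N → Fin d) → ℂ,
      ∃ (m : ℕ → ℕ) (A : ∀ i : ℕ, Fin d → Matrix (Fin (m i)) (Fin (m (i + 1))) ℂ),
        m 0 = 1 ∧ m N = 1 ∧
        (∀ i (h1 : 1 ≤ i) (h2 : i ≤ N - 1),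
          m i = (cutMatrix N d i (h2.trans (Nat.sub_le N 1)) ψ).rank) ∧
        (∀ σ, ψ σ = mpsCoeff m d A N σ)) ∧
    (∀ m : ℕ → ℕ, m 0 = 1 → m N = 1 →
      {ψ : (Fin N → Fin d) → ℂ |
          ∃ A : ∀ i : ℕ, Fin d → Matrix (Fin (m i)) (Fin (m (i + 1))) ℂ,
            ∀ σ, ψ σ = mpsCoeff m d A N σ} =
        {ψ : (Fin N → Fin d) → ℂ |
          ∀ i (h1 : 1 ≤ i) (h2 : i ≤ N - 1),
            (cutMatrix N d i (h2.trans (Nat.sub_le N 1)) ψ).rank ≤ m i}) := by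
  refine ⟨fun ψ => ?_, fun m hm0 hmN => Set.ext fun ψ => ⟨?_, fun h => ?_⟩⟩
  · let m i := if 0 < i ∧ i < N then Module.finrank ℂ (MPS.cutSpan ψ i) else 1
    obtain ⟨A, hA⟩ := MPS.exists_mps_of_finrank_le (ψ := ψ) (m := m) hN (by simp [m])
      (by simp [m]) fun i hi0 hiN => by simp [m, hi0, hiN]
    refine ⟨m, A, by simp [m], by simp [m], fun i h1 h2 => ?_, hA⟩
    rw [MPS.rank_cutMatrix]
    simp [m]
    omega
  · rintro ⟨A, hA⟩ i - h2
    obtain ⟨R, hR⟩ := MPS.exists_isCutFactorization_of_mps hA (by omega : i ≤ N)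
    exact (MPS.rank_cutMatrix _ ψ).trans_le (MPS.finrank_cutSpan_le hR)
  · exact MPS.exists_mps_of_finrank_le hN hm0 (by omega) fun i hi0 hiN =>
      (MPS.rank_cutMatrix _ ψ).symm.trans_le (h i hi0 (by omega))
end

section
/- The set of normalized MPS with open boundary conditions, oMPS(N, {m_i}, d) = { ψ ∈ (ℂ^d)^{⊗N} : ‖ψ‖ = 1 and ψ has an OBC-MPS representation with bond dimensions ≤ m_i }, is a closed subset of (ℂ^d)^{⊗N}. -/
open Submodule Set Function

namespace Matrix

variable {ι κ : Type*} [Fintype ι] [Fintype κ]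

theorem lt_rank_iff_exists_linearIndependent_row {K : Type*} [Field K] (M : Matrix ι κ K)
    (k : ℕ) : k < M.rank ↔ ∃ f : Fin (k + 1) → ι, LinearIndependent K (M.row ∘ f) := by
  constructor
  · intro hk
    obtain ⟨J, a, ha, hspan, hli⟩ := exists_linearIndependent' K M.row
    have : Finite J := Finite.of_injective a ha
    have : Fintype J := Fintype.ofFinite J
    have hcard : Fintype.card J = M.rank := by
      rw [linearIndependent_iff_card_eq_finrank_span.mp hli, Set.finrank, hspan,
        rank_eq_finrank_span_row]
    obtain ⟨e⟩ : Nonempty (Fin (k + 1) ↪ J) :=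
      Function.Embedding.nonempty_of_card_le (by simpa [hcard] using hk)
    exact ⟨a ∘ e, hli.comp e e.injective⟩
  · rintro ⟨f, hf⟩
    calc k < Fintype.card (Fin (k + 1)) := by simp
      _ = (M.submatrix f id).rank := (LinearIndependent.rank_matrix hf).symm
      _ ≤ M.rank := rank_submatrix_le M f id

theorem isClosed_setOf_rank_le {𝕜 : Type*} [NontriviallyNormedField 𝕜] [CompleteSpace 𝕜]
    (k : ℕ) : IsClosed {M : Matrix ι κ 𝕜 | M.rank ≤ k} := by
  have hcompl : {M : Matrix ι κ 𝕜 | M.rank ≤ k}ᶜ =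
      ⋃ f : Fin (k + 1) → ι, (fun M : Matrix ι κ 𝕜 => M.row ∘ f) ⁻¹'
        {v | LinearIndependent 𝕜 v} := by
    ext M
    simp [lt_rank_iff_exists_linearIndependent_row]
  rw [← isOpen_compl_iff, hcompl]
  exact isOpen_iUnion fun f => isOpen_setOfPred_linearIndependent.preimage <|
    continuous_pi fun s => continuous_apply (f s)

end Matrix

section Unfolding

variable {N : ℕ} {α K : Type*}

def mixAt (i : ℕ) (σ' σ : Fin N → α) (j : Fin N) : α := if (j : ℕ) < i then σ' j else σ j

@[simp]
theorem mixAt_zero (σ' σ : Fin N → α) : mixAt 0 σ' σ = σ := by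
  funext j
  simp [mixAt]

@[simp]
theorem mixAt_self (σ' σ : Fin N → α) : mixAt N σ' σ = σ' := by
  funext j
  simp [mixAt]

/-- The reshaping of `ψ` across the cut `{1, …, i} | {i+1, …, N}`, with rows and columns indexed
by full configurations: only the first `i` sites of the row index and the remaining sites of the
column index matter. -/
def unfolding (ψ : (Fin N → α) → K) (i : ℕ) : Matrix (Fin N → α) (Fin N → α) K :=
  Matrix.of fun σ' σ => ψ (mixAt i σ' σ)

theorem unfolding_zero_row (ψ : (Fin N → α) → K) (σ' : Fin N → α) :
    (unfolding ψ 0).row σ' = ψ := by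
  funext σ
  simp [unfolding, Matrix.row]

variable [CommSemiring K]

theorem unfolding_self_row (ψ : (Fin N → α) → K) (σ' : Fin N → α) :
    (unfolding ψ N).row σ' = ψ σ' • fun _ => 1 := by
  funext σ
  simp [unfolding, Matrix.row]

def sliceAt (i : Fin N) (a : α) : ((Fin N → α) → K) →ₗ[K] ((Fin N → α) → K) :=
  LinearMap.funLeft K K (update · i a)

theorem sliceAt_unfolding_row (ψ : (Fin N → α) → K) {i : ℕ} (hi : i < N) (a : α)
    (σ' : Fin N → α) :
    sliceAt ⟨i, hi⟩ a ((unfolding ψ i).row σ') =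
      (unfolding ψ (i + 1)).row (update σ' ⟨i, hi⟩ a) := by
  funext σ
  simp only [sliceAt, LinearMap.funLeft_apply, unfolding, Matrix.row, Matrix.of_apply]
  congr 1
  funext j
  simp only [mixAt, update_apply, Fin.ext_iff]
  split_ifs <;> first | rfl | omega

theorem map_sliceAt_span_unfolding_le (ψ : (Fin N → α) → K) {i : ℕ} (hi : i < N) (a : α) :
    (span K (range (unfolding ψ i).row)).map (sliceAt ⟨i, hi⟩ a) ≤
      span K (range (unfolding ψ (i + 1)).row) := by
  rw [map_span]
  refine span_mono ?_
  rintro _ ⟨_, ⟨σ', rfl⟩, rfl⟩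
  exact ⟨_, (sliceAt_unfolding_row ψ hi a σ').symm⟩

end Unfolding

section MPS

variable {N d : ℕ}

theorem exists_mpsProd_mixAt_eq_mul {m : ℕ → ℕ}
    (A : ∀ i : ℕ, Fin d → Matrix (Fin (m i)) (Fin (m (i + 1))) ℂ) {i n : ℕ} (hin : i ≤ n)
    (hn : n ≤ N) (σ : Fin N → Fin d) :
    ∃ T : Matrix (Fin (m i)) (Fin (m n)) ℂ, ∀ σ' : Fin N → Fin d,
      mpsProd m d A n (Fin.take n hn (mixAt i σ' σ)) =
        mpsProd m d A i (Fin.take i (hin.trans hn) σ') * T := by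
  induction n, hin using Nat.le_induction with
  | base =>
    refine ⟨1, fun σ' => ?_⟩
    rw [Matrix.mul_one]
    congr 1
    funext j
    simp [mixAt]
  | succ n hin ih =>
    obtain ⟨T, hT⟩ := ih (Nat.le_of_succ_le hn)
    refine ⟨T * A n (σ ⟨n, hn⟩), fun σ' => ?_⟩
    have hσn : mixAt i σ' σ ⟨n, hn⟩ = σ ⟨n, hn⟩ := if_neg (by simpa using hin)
    change mpsProd m d A n (Fin.take n (Nat.le_of_succ_le hn) (mixAt i σ' σ)) *
      A n (mixAt i σ' σ ⟨n, hn⟩) = _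
    rw [hT, hσn, Matrix.mul_assoc]

theorem rank_unfolding_le_of_eq_mpsCoeff {m : ℕ → ℕ}
    {A : ∀ i : ℕ, Fin d → Matrix (Fin (m i)) (Fin (m (i + 1))) ℂ} {ψ : (Fin N → Fin d) → ℂ}
    (hψ : ∀ σ, ψ σ = mpsCoeff m d A N σ) {i : ℕ} (hi : i ≤ N) :
    (unfolding ψ i).rank ≤ m i := by
  choose T hT using exists_mpsProd_mixAt_eq_mul A hi le_rfl
  let P : Matrix (Fin N → Fin d) (Fin (m i)) ℂ :=
    Matrix.of fun σ' s => ∑ p, mpsProd m d A i (Fin.take i hi σ') p s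
  let Q : Matrix (Fin (m i)) (Fin N → Fin d) ℂ := Matrix.of fun s σ => ∑ q, T σ s q
  have hPQ : unfolding ψ i = P * Q := by
    ext σ' σ
    simp only [unfolding, Matrix.of_apply, hψ, mpsCoeff, Matrix.mul_apply, P, Q]
    rw [← Fin.take_eq_self (mixAt i σ' σ), hT]
    simp only [Matrix.mul_apply, Finset.sum_mul_sum]
    conv_rhs => rw [Finset.sum_comm]
    exact Finset.sum_congr rfl fun _ _ => Finset.sum_comm
  rw [hPQ]
  calc (P * Q).rank ≤ P.rank := Matrix.rank_mul_le_left P Q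
    _ ≤ m i := (Matrix.rank_le_card_width P).trans_eq (Fintype.card_fin _)

section Transfer

variable {r : ℕ → ℕ} {R : ∀ i, Fin (r i) → (Fin N → Fin d) → ℂ}

theorem exists_transfer_of_sliceAt_mem_span
    (hR : ∀ i (hi : i < N) a p, sliceAt ⟨i, hi⟩ a (R i p) ∈ span ℂ (range (R (i + 1)))) :
    ∃ A : ∀ i, Fin d → Matrix (Fin (r i)) (Fin (r (i + 1))) ℂ,
      ∀ i (hi : i < N) p σ, R i p σ = ∑ q, A i (σ ⟨i, hi⟩) p q * R (i + 1) q σ := by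
  choose c hc using fun i hi a p => (mem_span_range_iff_exists_fun ℂ).mp (hR i hi a p)
  refine ⟨fun i a => if hi : i < N then Matrix.of (c i hi a) else 0, fun i hi p σ => ?_⟩
  calc R i p σ = sliceAt ⟨i, hi⟩ (σ ⟨i, hi⟩) (R i p) σ := by simp [sliceAt]
    _ = ∑ q, c i hi (σ ⟨i, hi⟩) p q * R (i + 1) q σ := by
        rw [← hc]
        simp
    _ = _ := by simp [hi]

theorem eq_sum_mpsProd_mul_of_transfer {A : ∀ i, Fin d → Matrix (Fin (r i)) (Fin (r (i + 1))) ℂ}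
    (hA : ∀ i (hi : i < N) p σ, R i p σ = ∑ q, A i (σ ⟨i, hi⟩) p q * R (i + 1) q σ)
    {n : ℕ} (hn : n ≤ N) (σ : Fin N → Fin d) (p : Fin (r 0)) :
    R 0 p σ = ∑ q, mpsProd r d A n (Fin.take n hn σ) p q * R n q σ := by
  induction n with
  | zero => simp [mpsProd, Matrix.one_apply]
  | succ n ih =>
    rw [ih (Nat.le_of_succ_le hn)]
    change _ = ∑ q, (mpsProd r d A n (Fin.take n (Nat.le_of_succ_le hn) σ) *
      A n (σ ⟨n, hn⟩)) p q * R (n + 1) q σ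
    simp only [hA n hn, Matrix.mul_apply, Finset.mul_sum, Finset.sum_mul, mul_assoc]
    exact Finset.sum_comm

end Transfer

section BondFamily

variable (ψ : (Fin N → Fin d) → ℂ)

noncomputable def bondDim (i : ℕ) : ℕ := if 0 < i ∧ i < N then (unfolding ψ i).rank else 1

theorem finrank_span_unfolding_row {i : ℕ} (h : 0 < i ∧ i < N) :
    Module.finrank ℂ (span ℂ (range (unfolding ψ i).row)) = bondDim ψ i := by
  rw [bondDim, if_pos h, Matrix.rank_eq_finrank_span_row]

/-- At an inner bond a basis of the row space of the unfolding; at the two ends `ψ` and the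
constant `1`, so that the transfer relations connect `ψ` to `1`. -/
noncomputable def bondFamily (i : ℕ) : Fin (bondDim ψ i) → (Fin N → Fin d) → ℂ :=
  if h : 0 < i ∧ i < N then
    fun p => Module.finBasisOfFinrankEq ℂ _ (finrank_span_unfolding_row ψ h) p
  else if i = 0 then fun _ => ψ else fun _ _ => 1

@[simp]
theorem bondDim_zero : bondDim ψ 0 = 1 := by simp [bondDim]

@[simp]
theorem bondDim_self : bondDim ψ N = 1 := by simp [bondDim]

theorem bondFamily_zero (p : Fin (bondDim ψ 0)) : bondFamily ψ 0 p = ψ := by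
  simp [bondFamily]

theorem bondFamily_self (hN : 0 < N) (p : Fin (bondDim ψ N)) :
    bondFamily ψ N p = fun _ => 1 := by
  simp [bondFamily, hN.ne']

theorem bondFamily_mem_span_unfolding [Nonempty (Fin d)] {i : ℕ} (hi : i < N)
    (p : Fin (bondDim ψ i)) : bondFamily ψ i p ∈ span ℂ (range (unfolding ψ i).row) := by
  by_cases h0 : i = 0
  · subst h0
    rw [bondFamily_zero, ← unfolding_zero_row ψ (Classical.arbitrary _)]
    exact subset_span (mem_range_self _)
  · have h : 0 < i ∧ i < N := ⟨Nat.pos_of_ne_zero h0, hi⟩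
    simp only [bondFamily, dif_pos h]
    exact SetLike.coe_mem _

theorem span_unfolding_le_span_bondFamily {i : ℕ} (h0 : 0 < i) (hi : i ≤ N) :
    span ℂ (range (unfolding ψ i).row) ≤ span ℂ (range (bondFamily ψ i)) := by
  rcases hi.lt_or_eq with hi | rfl
  · have h : 0 < i ∧ i < N := ⟨h0, hi⟩
    set b := Module.finBasisOfFinrankEq ℂ _ (finrank_span_unfolding_row ψ h)
    have hb : bondFamily ψ i = Submodule.subtype _ ∘ b := by
      simp only [bondFamily, dif_pos h]
      rfl
    rw [hb, range_comp, ← map_span, b.span_eq, Submodule.map_top, range_subtype]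
  · rw [span_le]
    rintro _ ⟨σ', rfl⟩
    rw [unfolding_self_row, ← bondFamily_self ψ h0 ⟨0, by simp⟩]
    exact smul_mem _ _ (subset_span (mem_range_self _))

theorem sliceAt_bondFamily_mem_span {i : ℕ} (hi : i < N) (a : Fin d) (p : Fin (bondDim ψ i)) :
    sliceAt ⟨i, hi⟩ a (bondFamily ψ i p) ∈ span ℂ (range (bondFamily ψ (i + 1))) :=
  have : Nonempty (Fin d) := ⟨a⟩
  span_unfolding_le_span_bondFamily ψ i.succ_pos hi <|
    map_sliceAt_span_unfolding_le ψ hi a <|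
      mem_map_of_mem (bondFamily_mem_span_unfolding ψ hi p)

theorem exists_mpsCoeff_bondDim (hN : 0 < N) :
    ∃ A : ∀ i, Fin d → Matrix (Fin (bondDim ψ i)) (Fin (bondDim ψ (i + 1))) ℂ,
      ∀ σ, ψ σ = mpsCoeff (bondDim ψ) d A N σ := by
  obtain ⟨A, hA⟩ := exists_transfer_of_sliceAt_mem_span fun _ hi a p =>
    sliceAt_bondFamily_mem_span ψ hi a p
  refine ⟨A, fun σ => ?_⟩
  have hchain (p) := eq_sum_mpsProd_mul_of_transfer hA le_rfl σ p
  simp only [bondFamily_zero, bondFamily_self ψ hN, Fin.take_eq_self, mul_one] at hchain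
  simp [mpsCoeff, ← hchain]

end BondFamily

theorem exists_mps_iff_forall_rank_unfolding_le (hN : 0 < N) {m : ℕ → ℕ} (hm0 : 1 ≤ m 0)
    (hmN : 1 ≤ m N) (ψ : (Fin N → Fin d) → ℂ) :
    (∃ (m' : ℕ → ℕ) (A : ∀ i : ℕ, Fin d → Matrix (Fin (m' i)) (Fin (m' (i + 1))) ℂ),
        m' 0 = 1 ∧ m' N = 1 ∧ (∀ i, i ≤ N → m' i ≤ m i) ∧ ∀ σ, ψ σ = mpsCoeff m' d A N σ) ↔
      ∀ i ∈ Ioo 0 N, (unfolding ψ i).rank ≤ m i := by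
  constructor
  · rintro ⟨m', A, -, -, hm', hψ⟩ i hi
    exact (rank_unfolding_le_of_eq_mpsCoeff hψ hi.2.le).trans (hm' i hi.2.le)
  · intro hrank
    obtain ⟨A, hA⟩ := exists_mpsCoeff_bondDim ψ hN
    refine ⟨bondDim ψ, A, bondDim_zero ψ, bondDim_self ψ, fun i hi => ?_, hA⟩
    by_cases h : 0 < i ∧ i < N
    · rw [bondDim, if_pos h]
      exact hrank i h
    · obtain rfl | rfl : i = 0 ∨ i = N := by omega
      · simpa using hm0
      · simpa using hmN

end MPS

/-- The set `oMPS(N, {m_i}, d)` of normalized states admitting an OBC-MPS representation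
with bond dimensions at most `m i` is a closed subset of `(ℂ^d)^{⊗N}`. -/
theorem oMPS_isClosed (N d : ℕ) (hN : 1 ≤ N) (m : ℕ → ℕ)
    (hm0 : m 0 = 1) (hmN : m N = 1) :
    IsClosed {ψ : (Fin N → Fin d) → ℂ |
      (∑ σ : Fin N → Fin d, ‖ψ σ‖ ^ 2) = 1 ∧
      ∃ (m' : ℕ → ℕ) (A : ∀ i : ℕ, Fin d → Matrix (Fin (m' i)) (Fin (m' (i + 1))) ℂ),
        m' 0 = 1 ∧ m' N = 1 ∧ (∀ i, i ≤ N → m' i ≤ m i) ∧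
        ∀ σ, ψ σ = mpsCoeff m' d A N σ} := by
  simp_rw [exists_mps_iff_forall_rank_unfolding_le hN hm0.ge hmN.ge, ofPred_and, ofPred_forall]
  refine IsClosed.inter ?_ (isClosed_iInter fun i => isClosed_iInter fun _ => ?_)
  · exact isClosed_eq (by fun_prop) continuous_const
  · have hcont : Continuous fun ψ : (Fin N → Fin d) → ℂ => unfolding ψ i :=
      continuous_matrix fun _ _ => continuous_apply _
    exact (Matrix.isClosed_setOf_rank_le (m i)).preimage hcont
end

section
/- Every OBC-MPS can be brought to right-canonical form: given tensors A_i defining a normalized MPS ψ, there exist tensors B_i with B_i^σ ∈ Matrix(m̃_{i-1}, m̃_i, ℂ), m̃_i ≤ m_i, satisfying Σ_σ B_i^σ (B_i^σ)† = 1 for all i, such that ψ(σ_1,...,σ_N) = B_1^{σ_1}⋯B_N^{σ_N}. -/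
open scoped Matrix

/-!
Reshaping a tensor `X` into the matrix `(X^1 ⋯ X^d)` and factoring it as `L Q` with `Q` having
orthonormal rows gives `X^s = L Q^s` with `∑_s Q^s (Q^s)† = 1`, and no more rows than `X^s`.
Sweeping from the right end and absorbing each `L` into the tensor to its left yields
`ψ(σ) = L B_1^{σ_1} ⋯ B_N^{σ_N}` with every `B_i` isometric and `L` a single row. Products of
isometric tensors satisfy `∑_σ P(σ) P(σ)† = 1`, so the normalization of `ψ` says `L L† = 1`,
and absorbing `L` into `B_1` keeps that tensor isometric.
-/
theorem Matrix.exists_lq_factorization {a : ℕ} {β : Type*} [Fintype β]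
    (M : Matrix (Fin a) β ℂ) :
    ∃ r ≤ a, ∃ (L : Matrix (Fin a) (Fin r) ℂ) (Q : Matrix (Fin r) β ℂ),
      Q * Qᴴ = 1 ∧ M = L * Q := by
  classical
  let rows : Fin a → EuclideanSpace ℂ β := fun p => WithLp.toLp 2 (M p)
  let W := Submodule.span ℂ (Set.range rows)
  let b := stdOrthonormalBasis ℂ W
  have hrow : ∀ p, rows p ∈ W := fun p => Submodule.subset_span ⟨p, rfl⟩
  refine ⟨Module.finrank ℂ W, by simpa [Set.finrank] using finrank_range_le_card (R := ℂ) rows,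
    Matrix.of fun p i => b.repr ⟨rows p, hrow p⟩ i,
    Matrix.of fun i j => (b i : EuclideanSpace ℂ β) j, ?_, ?_⟩
  · have hgram : Matrix.gram ℂ (fun i => (b i : EuclideanSpace ℂ β)) = 1 :=
      Matrix.gram_eq_one_iff_orthonormal.mpr (b.orthonormal.comp_linearIsometry W.subtypeₗᵢ)
    ext i k
    simpa [Matrix.mul_apply, EuclideanSpace.inner_eq_star_dotProduct, dotProduct,
      Matrix.one_apply, eq_comm] using congrFun (congrFun hgram k) i
  · ext p j
    have hsum := congrArg (fun v : W => (v : EuclideanSpace ℂ β) j) (b.sum_repr ⟨rows p, hrow p⟩)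
    simpa [Matrix.mul_apply, rows] using hsum.symm

theorem exists_tensor_lq_factorization {d a b : ℕ} (X : Fin d → Matrix (Fin a) (Fin b) ℂ) :
    ∃ r ≤ a, ∃ (L : Matrix (Fin a) (Fin r) ℂ) (Q : Fin d → Matrix (Fin r) (Fin b) ℂ),
      ∑ s, Q s * (Q s)ᴴ = 1 ∧ ∀ s, X s = L * Q s := by
  obtain ⟨r, hr, L, Q, hQ, hX⟩ :=
    Matrix.exists_lq_factorization (Matrix.of fun p (sj : Fin d × Fin b) => X sj.1 p sj.2)
  refine ⟨r, hr, L, fun s => Matrix.of fun i j => Q i (s, j), ?_, fun s => ?_⟩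
  · rw [← hQ]
    ext i k
    simp [Matrix.sum_apply, Matrix.mul_apply, Fintype.sum_prod_type]
  · ext p j
    simpa [Matrix.mul_apply] using congrFun (congrFun hX p) (s, j)

theorem Matrix.sum_mul_mul_conjTranspose {ι α β γ : Type*} [Fintype ι] [Fintype β] [Fintype γ]
    (L : Matrix α β ℂ) (X : ι → Matrix β γ ℂ) :
    ∑ i, L * X i * (L * X i)ᴴ = L * (∑ i, X i * (X i)ᴴ) * Lᴴ := by
  simp only [Matrix.conjTranspose_mul, Matrix.mul_sum, Matrix.sum_mul, Matrix.mul_assoc]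

def consSeq {α : Type*} (a : α) (f : ℕ → α) : ℕ → α
  | 0 => a
  | i + 1 => f i

def consTensor {d a : ℕ} {r : ℕ → ℕ} (X : Fin d → Matrix (Fin a) (Fin (r 0)) ℂ)
    (B : ∀ i, Fin d → Matrix (Fin (r i)) (Fin (r (i + 1))) ℂ) :
    ∀ i, Fin d → Matrix (Fin (consSeq a r i)) (Fin (consSeq a r (i + 1))) ℂ
  | 0 => X
  | i + 1 => B i

section mpsProd

variable {d : ℕ}

theorem mpsProd_succ_left {m : ℕ → ℕ} (A : ∀ i, Fin d → Matrix (Fin (m i)) (Fin (m (i + 1))) ℂ) :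
    ∀ (n : ℕ) (σ : Fin (n + 1) → Fin d), mpsProd m d A (n + 1) σ =
      A 0 (σ 0) * mpsProd (fun i => m (i + 1)) d (fun i => A (i + 1)) n (Fin.tail σ)
  | 0, σ => by simp [mpsProd]
  | n + 1, σ => by
    rw [mpsProd, mpsProd_succ_left A n, mpsProd, Matrix.mul_assoc]
    rfl

theorem mpsProd_consTensor {a : ℕ} {r : ℕ → ℕ} (X : Fin d → Matrix (Fin a) (Fin (r 0)) ℂ)
    (B : ∀ i, Fin d → Matrix (Fin (r i)) (Fin (r (i + 1))) ℂ) (n : ℕ) (σ : Fin (n + 1) → Fin d) :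
    mpsProd (consSeq a r) d (consTensor X B) (n + 1) σ = X (σ 0) * mpsProd r d B n (Fin.tail σ) :=
  mpsProd_succ_left _ n σ

theorem sum_mpsProd_mul_conjTranspose_eq_one_of_isometric (n : ℕ) (m : ℕ → ℕ)
    (B : ∀ i, Fin d → Matrix (Fin (m i)) (Fin (m (i + 1))) ℂ)
    (hB : ∀ i < n, ∑ s, B i s * (B i s)ᴴ = 1) :
    ∑ σ, mpsProd m d B n σ * (mpsProd m d B n σ)ᴴ = 1 := by
  induction n generalizing m with
  | zero => simp [mpsProd]
  | succ n ih =>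
    rw [← (Fin.consEquiv fun _ => Fin d).sum_comp, Fintype.sum_prod_type]
    simp only [Fin.consEquiv, Equiv.coe_fn_mk, mpsProd_succ_left, Fin.cons_zero, Fin.tail_cons,
      Matrix.sum_mul_mul_conjTranspose, ih _ _ fun i hi => hB (i + 1) (by omega), Matrix.mul_one]
    exact hB 0 n.succ_pos

theorem sum_mpsProd_mul_conjTranspose_eq_one_of_normalized {N : ℕ} {m : ℕ → ℕ}
    (hm0 : m 0 = 1) (hmN : m N = 1) (A : ∀ i, Fin d → Matrix (Fin (m i)) (Fin (m (i + 1))) ℂ)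
    (hnorm : ∑ σ : Fin N → Fin d, ‖mpsCoeff m d A N σ‖ ^ 2 = 1) :
    ∑ σ, mpsProd m d A N σ * (mpsProd m d A N σ)ᴴ = 1 := by
  have : Unique (Fin (m 0)) := hm0 ▸ inferInstance
  have : Unique (Fin (m N)) := hmN ▸ inferInstance
  ext p p'
  obtain rfl := Subsingleton.elim p p'
  have hnormℂ := congrArg (fun x : ℝ => (x : ℂ)) hnorm
  simp only [mpsCoeff, Fintype.sum_unique] at hnormℂ
  simpa [Matrix.sum_apply, Matrix.mul_apply, Complex.mul_conj, Complex.normSq_eq_norm_sq,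
    Subsingleton.elim p default] using hnormℂ

/-- `m N = r N` holds only propositionally, hence the reindexing of the columns. -/
theorem exists_mpsProd_eq_mul_isometric (N : ℕ) (m : ℕ → ℕ)
    (A : ∀ i, Fin d → Matrix (Fin (m i)) (Fin (m (i + 1))) ℂ) :
    ∃ (r : ℕ → ℕ) (B : ∀ i, Fin d → Matrix (Fin (r i)) (Fin (r (i + 1))) ℂ)
      (L : Matrix (Fin (m 0)) (Fin (r 0)) ℂ) (hr : m N = r N),
      (∀ i ≤ N, r i ≤ m i) ∧ (∀ i < N, ∑ s, B i s * (B i s)ᴴ = 1) ∧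
      ∀ σ, mpsProd m d A N σ = (L * mpsProd r d B N σ).submatrix id (Fin.cast hr) := by
  induction N generalizing m with
  | zero =>
    exact ⟨m, A, 1, rfl, fun _ _ => le_rfl, fun _ h => absurd h (Nat.not_lt_zero _),
      fun σ => by simp [mpsProd]⟩
  | succ N ih =>
    obtain ⟨r, B, L', hr, hle, hiso, hprod⟩ := ih (fun i => m (i + 1)) (fun i => A (i + 1))
    obtain ⟨r₀, hr₀, L, Q, hQ, hAL⟩ := exists_tensor_lq_factorization fun s => A 0 s * L'
    refine ⟨consSeq r₀ r, consTensor Q B, L, hr, ?_, ?_, fun σ => ?_⟩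
    · rintro (_ | i) hi
      exacts [hr₀, hle i (by omega)]
    · rintro (_ | i) hi
      exacts [hQ, hiso i (by omega)]
    · rw [mpsProd_consTensor]
      change _ = (L * (Q (σ 0) * mpsProd r d B N (Fin.tail σ))).submatrix id (Fin.cast hr)
      rw [← Matrix.mul_assoc, ← hAL, Matrix.mul_assoc,
        Matrix.submatrix_mul _ _ id id _ Function.bijective_id, Matrix.submatrix_id_id, ← hprod,
        ← mpsProd_succ_left]

end mpsProd

/-- Right-canonical form: every normalized OBC-MPS with bond dimensions `m i` can be
rewritten with tensors `B_i` of bond dimensions `m' i ≤ m i` satisfying the isometry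
conditions `∑_σ B_i^σ (B_i^σ)† = 1`. -/
theorem mps_right_canonical_form (N d : ℕ) (hN : 1 ≤ N) (m : ℕ → ℕ)
    (hm0 : m 0 = 1) (hmN : m N = 1)
    (A : ∀ i : ℕ, Fin d → Matrix (Fin (m i)) (Fin (m (i + 1))) ℂ)
    (hnorm : ∑ σ : Fin N → Fin d, ‖mpsCoeff m d A N σ‖ ^ 2 = 1) :
    ∃ (m' : ℕ → ℕ) (B : ∀ i : ℕ, Fin d → Matrix (Fin (m' i)) (Fin (m' (i + 1))) ℂ),
      m' 0 = 1 ∧ m' N = 1 ∧ (∀ i, i ≤ N → m' i ≤ m i) ∧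
      (∀ i, i < N → ∑ σ : Fin d, B i σ * (B i σ)ᴴ = 1) ∧
      ∀ σ, mpsCoeff m d A N σ = mpsCoeff m' d B N σ := by
  obtain ⟨n, rfl⟩ : ∃ n, N = n + 1 := ⟨N - 1, by omega⟩
  obtain ⟨r, B, L, hr, hle, hiso, hprod⟩ := exists_mpsProd_eq_mul_isometric (n + 1) m A
  let m' := consSeq (m 0) fun i => r (i + 1)
  let B' := consTensor (fun s => L * B 0 s) fun i => B (i + 1)
  have hprod' : ∀ σ, mpsProd m' d B' (n + 1) σ = L * mpsProd r d B (n + 1) σ := fun σ => by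
    rw [mpsProd_consTensor, mpsProd_succ_left, Matrix.mul_assoc]
  have hcoeff : ∀ σ, mpsCoeff m d A (n + 1) σ = mpsCoeff m' d B' (n + 1) σ := fun σ => by
    simp only [mpsCoeff, hprod, hprod']
    exact Finset.sum_congr rfl fun p _ => Fintype.sum_equiv (finCongr hr) _ _ fun _ => rfl
  have hLL : L * Lᴴ = 1 := by
    have h : ∑ σ, L * mpsProd r d B (n + 1) σ * (L * mpsProd r d B (n + 1) σ)ᴴ = 1 := by
      have h' := sum_mpsProd_mul_conjTranspose_eq_one_of_normalized (m := m') (N := n + 1) hm0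
        (hr.symm.trans hmN) B' (by simpa only [hcoeff] using hnorm)
      simp only [hprod'] at h'
      exact h'
    rwa [Matrix.sum_mul_mul_conjTranspose,
      sum_mpsProd_mul_conjTranspose_eq_one_of_isometric _ r B hiso, Matrix.mul_one] at h
  refine ⟨m', B', hm0, hr.symm.trans hmN, ?_, ?_, hcoeff⟩
  · rintro (_ | i) hi
    exacts [le_rfl, hle (i + 1) hi]
  · rintro (_ | i) hi
    · show ∑ s, L * B 0 s * (L * B 0 s)ᴴ = 1
      simpa only [Matrix.sum_mul_mul_conjTranspose, hiso 0 hi, Matrix.mul_one] using hLL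
    · exact hiso (i + 1) hi
end

section
/- Let A^σ (σ = 1,...,d) be m×m matrices such that the ℓ-site products {A^{σ_1}⋯A^{σ_ℓ} : (σ_1,...,σ_ℓ) ∈ [d]^ℓ} span the full space of m×m complex matrices, and suppose Σ_σ A^σ (A^σ)† = 1. Then the (ℓ+1)-site products {A^{σ_0} A^{σ_1}⋯A^{σ_ℓ} : (σ_0,...,σ_ℓ) ∈ [d]^{ℓ+1}} also span the space of m×m matrices. -/
/-!
Every `(ℓ+1)`-site product is `A^{σ₀}` times an `ℓ`-site product, so the span of the former is
the product of submodules `span {A^σ} * span {ℓ-site products} = span {A^σ} * ⊤`. Writing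
`N = ∑_σ A^σ ((A^σ)† N)` shows that this right ideal is everything.
-/

open scoped Matrix Pointwise

def wordProducts {ι M : Type*} [Monoid M] (a : ι → M) (ℓ : ℕ) : Set M :=
  {x | ∃ σ : Fin ℓ → ι, x = (List.ofFn fun i => a (σ i)).prod}

theorem wordProducts_succ {ι M : Type*} [Monoid M] (a : ι → M) (ℓ : ℕ) :
    wordProducts a (ℓ + 1) = Set.range a * wordProducts a ℓ := by
  ext x
  constructor
  · rintro ⟨σ, rfl⟩
    exact ⟨a (σ 0), ⟨σ 0, rfl⟩, _, ⟨Fin.tail σ, rfl⟩, by simp [List.ofFn_succ, Fin.tail]⟩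
  · rintro ⟨_, ⟨i, rfl⟩, _, ⟨σ, rfl⟩, rfl⟩
    exact ⟨Fin.cons i σ, by simp [List.ofFn_succ]⟩

theorem Submodule.span_range_mul_top_eq_top {R A ι : Type*} [CommSemiring R] [Semiring A]
    [Algebra R A] [Fintype ι] (a b : ι → A) (h : ∑ i, a i * b i = 1) :
    span R (Set.range a) * ⊤ = ⊤ := by
  refine eq_top_iff.2 fun x _ => ?_
  rw [← one_mul x, ← h, Finset.sum_mul]
  refine sum_mem fun i _ => ?_
  rw [mul_assoc]
  exact mul_mem_mul (subset_span ⟨i, rfl⟩) mem_top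

/-- If the `ℓ`-site products `A^{σ_1} ⋯ A^{σ_ℓ}` span all `m × m` matrices (injectivity
of the blocked MPS tensor) and `∑_σ A^σ (A^σ)† = 1`, then the `(ℓ+1)`-site products also
span all `m × m` matrices. -/
theorem injectivity_extends (d m ℓ : ℕ) (A : Fin d → Matrix (Fin m) (Fin m) ℂ)
    (hspan : Submodule.span ℂ
        {M : Matrix (Fin m) (Fin m) ℂ |
          ∃ σ : Fin ℓ → Fin d, M = (List.ofFn fun i => A (σ i)).prod} = ⊤)
    (hiso : ∑ σ : Fin d, A σ * (A σ)ᴴ = 1) :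
    Submodule.span ℂ
        {M : Matrix (Fin m) (Fin m) ℂ |
          ∃ σ : Fin (ℓ + 1) → Fin d, M = (List.ofFn fun i => A (σ i)).prod} = ⊤ := by
  change Submodule.span ℂ (wordProducts A (ℓ + 1)) = ⊤
  change Submodule.span ℂ (wordProducts A ℓ) = ⊤ at hspan
  rw [wordProducts_succ, ← Submodule.span_mul_span, hspan]
  exact Submodule.span_range_mul_top_eq_top A _ hiso
end

section
/- For N ≥ 3 and m ≥ 2, the two-domain state τ = Σ_{n} (e_n ⊗ e_n)^{⊗N} + Σ_{i=1}^{N-1} Σ_{n ≠ n'} (e_n⊗e_n)^{⊗(i-1)} ⊗ (e_n⊗e_{n'}) ⊗ (e_{n'}⊗e_{n'})^{⊗(N-i-1)} ⊗ (e_{n'}⊗e_n) in ((ℂ^m ⊗ ℂ^m))^{⊗N} has the property that for every site j, the reduced density matrix ρ_j = Tr_{[N]∖{j}} |τ⟩⟨τ| has full rank m². -/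
/-!
Reshape `τ` across the cut `{j} | rest` into a matrix `A` whose rows are indexed by the state
at site `j`, so that `ρ_j = A Aᴴ`. The support of `τ` consists of wall configurations (constant
ones included); a non-constant one is off-diagonal exactly at its wall and at the last site, and is
read off from either of these two sites, one of which differs from `j`. Hence a configuration in
the support is determined by its restriction to the sites other than `j`, so distinct rows of `A`
have disjoint supports: they are orthogonal and `ρ_j` is diagonal. Every local state occurs at site `j` in the support of `τ`, so
no row of `A` vanishes and every diagonal entry of `ρ_j` is nonzero.
-/

/-- The two-domain state `τ` on `N` sites with local space `ℂ^m ⊗ ℂ^m`: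
`τ = ∑_n (e_n⊗e_n)^{⊗N} + ∑_{i=1}^{N-1} ∑_{n≠n'} (e_n⊗e_n)^{⊗(i-1)} ⊗ (e_n⊗e_{n'}) ⊗
(e_{n'}⊗e_{n'})^{⊗(N-i-1)} ⊗ (e_{n'}⊗e_n)` (sites indexed `0,…,N-1`, wall at `i-1`). -/
noncomputable def twoDomain (N m : ℕ) : (Fin N → Fin m × Fin m) → ℂ := fun σ =>
  (∑ n : Fin m, if (∀ j, σ j = (n, n)) then 1 else 0) +
    ∑ i : Fin (N - 1), ∑ n : Fin m, ∑ n' : Fin m,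
      if n' ≠ n ∧ (∀ j : Fin N,
          σ j = (if (j : ℕ) < (i : ℕ) then (n, n)
                 else if (j : ℕ) = (i : ℕ) then (n, n')
                 else if (j : ℕ) < N - 1 then (n', n') else (n', n))) then 1 else 0

/-- The reduced density matrix of the two-domain state at site `j`, obtained by tracing
out all other sites. -/
noncomputable def twoDomainRDM (N m : ℕ) (j : Fin N) :
    Matrix (Fin m × Fin m) (Fin m × Fin m) ℂ :=
  Matrix.of fun s s' =>
    ∑ σB : {k : Fin N // k ≠ j} → Fin m × Fin m,
      twoDomain N m (fun k => if h : k = j then s else σB ⟨k, h⟩) *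
        (starRingEnd ℂ) (twoDomain N m (fun k => if h : k = j then s' else σB ⟨k, h⟩))

open Matrix Function

namespace Matrix

variable {m n R : Type*} [Fintype m] [Fintype n]
  [Field R] [PartialOrder R] [StarRing R] [StarOrderedRing R]

theorem rank_mul_conjTranspose_of_orthogonal_rows (A : Matrix m n R)
    (horth : ∀ i i', i ≠ i' → A i ⬝ᵥ star (A i') = 0) (hrow : ∀ i, A i ≠ 0) :
    (A * Aᴴ).rank = Fintype.card m := by
  classical
  have hdiag : A * Aᴴ = diagonal fun i => A i ⬝ᵥ star (A i) := by
    ext i i'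
    rcases eq_or_ne i i' with rfl | hii
    · rw [diagonal_apply_eq]
      rfl
    · exact (horth i i' hii).trans (diagonal_apply_ne _ hii).symm
  rw [hdiag, rank_diagonal]
  exact Fintype.card_congr <|
    Equiv.subtypeUnivEquiv fun i => dotProduct_self_star_eq_zero.not.2 (hrow i)

end Matrix

section SiteSplitting

variable {ι α 𝕜 : Type*} [DecidableEq ι] {ψ : (ι → α) → 𝕜} {j : ι}

def amplitudeMatrix (ψ : (ι → α) → 𝕜) (j : ι) : Matrix α ({k // k ≠ j} → α) 𝕜 :=
  Matrix.of fun s σB => ψ ((Equiv.funSplitAt j α).symm (s, σB))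

theorem amplitudeMatrix_row_ne_zero [Zero 𝕜] {σ : ι → α} (hσ : ψ σ ≠ 0) :
    amplitudeMatrix ψ j (σ j) ≠ 0 := by
  intro h
  have hrow := congrFun h (Equiv.funSplitAt j α σ).2
  change ψ ((Equiv.funSplitAt j α).symm (Equiv.funSplitAt j α σ)) = 0 at hrow
  exact hσ (by rwa [Equiv.symm_apply_apply] at hrow)

variable [Fintype ι] [Fintype α]

theorem amplitudeMatrix_rows_orthogonal [NonUnitalNonAssocSemiring 𝕜] [StarRing 𝕜]
    [NoZeroDivisors 𝕜]
    (hinj : Set.InjOn (fun σ k => σ k.1 : (ι → α) → {k // k ≠ j} → α) (support ψ))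
    {s s' : α} (hss : s ≠ s') :
    amplitudeMatrix ψ j s ⬝ᵥ star (amplitudeMatrix ψ j s') = 0 := by
  refine Finset.sum_eq_zero fun σB _ => ?_
  by_contra h
  obtain ⟨hs, hs'⟩ := mul_ne_zero_iff.1 h
  have := congrFun (hinj hs (star_ne_zero.1 hs') (funext fun k => ?_)) j
  · simp only [Equiv.funSplitAt_symm_apply, ↓reduceDIte] at this
    exact hss this
  · simp [Equiv.funSplitAt_symm_apply, k.2]

theorem rank_amplitudeMatrix_mul_conjTranspose [Field 𝕜] [PartialOrder 𝕜] [StarRing 𝕜]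
    [StarOrderedRing 𝕜]
    (hinj : Set.InjOn (fun σ k => σ k.1 : (ι → α) → {k // k ≠ j} → α) (support ψ))
    (hsurj : ∀ s, ∃ σ, ψ σ ≠ 0 ∧ σ j = s) :
    (amplitudeMatrix ψ j * (amplitudeMatrix ψ j)ᴴ).rank = Fintype.card α :=
  rank_mul_conjTranspose_of_orthogonal_rows _ (fun _ _ => amplitudeMatrix_rows_orthogonal hinj)
    fun s => by
      obtain ⟨σ, hσ, rfl⟩ := hsurj s
      exact amplitudeMatrix_row_ne_zero hσ

end SiteSplitting

section TwoDomain

variable {N m : ℕ}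

/-- The configuration of the `(i, n, n')` wall term of `twoDomain`. -/
def wallConfig (N m : ℕ) (i : Fin (N - 1)) (n n' : Fin m) : Fin N → Fin m × Fin m := fun k =>
  if (k : ℕ) < i then (n, n)
  else if (k : ℕ) = i then (n, n')
  else if (k : ℕ) < N - 1 then (n', n') else (n', n)

variable {i : Fin (N - 1)} {n n' : Fin m} {k : Fin N}

theorem wallConfig_self : wallConfig N m i n n = fun _ => (n, n) := by
  funext k
  unfold wallConfig
  split_ifs <;> rfl

theorem wallConfig_apply_of_eq_wall (hk : (k : ℕ) = i) : wallConfig N m i n n' k = (n, n') := by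
  simp [wallConfig, hk]

theorem wallConfig_apply_of_eq_last (hk : (k : ℕ) = N - 1) :
    wallConfig N m i n n' k = (n', n) := by
  have := i.isLt
  simp [wallConfig, hk, show ¬ N - 1 < i by omega, show N - 1 ≠ i by omega]

theorem wallConfig_apply_fst_eq_snd (hi : (k : ℕ) ≠ i) (hl : (k : ℕ) ≠ N - 1) :
    (wallConfig N m i n n' k).1 = (wallConfig N m i n n' k).2 := by
  unfold wallConfig
  split_ifs <;> first | rfl | omega

theorem twoDomain_ne_zero_iff (hN : 2 ≤ N) (σ : Fin N → Fin m × Fin m) :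
    twoDomain N m σ ≠ 0 ↔ ∃ i n n', wallConfig N m i n n' = σ := by
  -- `twoDomain` is a cast of a sum of `0/1` indicators, so it vanishes only if every term does.
  have hcast : twoDomain N m σ = ↑((∑ n : Fin m, if ∀ k, σ k = (n, n) then 1 else 0) +
      ∑ i, ∑ n, ∑ n', if n' ≠ n ∧ ∀ k, σ k = wallConfig N m i n n' k then 1 else 0 : ℕ) := by
    push_cast
    rfl
  rw [hcast, Nat.cast_ne_zero]
  simp only [ne_eq, Nat.add_eq_zero_iff, Finset.sum_eq_zero_iff, Finset.mem_univ, true_implies,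
    ite_eq_right_iff, one_ne_zero, imp_false, not_and_or, not_forall, not_or, not_not,
    ← funext_iff]
  constructor
  · rintro (⟨n, rfl⟩ | ⟨i, n, n', hne, rfl⟩)
    · exact ⟨⟨0, by omega⟩, n, n, wallConfig_self⟩
    · exact ⟨i, n, n', rfl⟩
  · rintro ⟨i, n, n', rfl⟩
    rcases eq_or_ne n' n with rfl | hne
    · exact Or.inl ⟨n', wallConfig_self⟩
    · exact Or.inr ⟨i, n, n', hne, rfl⟩

variable {j : Fin N} {i' : Fin (N - 1)} {a b c d : Fin m}

theorem wallConfig_apply_wall_ne (hab : a ≠ b) (hii : i ≠ i') :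
    wallConfig N m i a b (i.castLE (N.sub_le 1)) ≠
      wallConfig N m i' c d (i.castLE (N.sub_le 1)) := by
  have hdiag := wallConfig_apply_fst_eq_snd (n := c) (n' := d) (k := i.castLE (N.sub_le 1))
    (Fin.val_ne_of_ne hii) (by rw [Fin.val_castLE]; omega)
  rw [wallConfig_apply_of_eq_wall rfl]
  intro h
  rw [← h] at hdiag
  exact hab hdiag

theorem wallConfig_eq_of_agree_off_site_same_wall
    (h : ∀ k ≠ j, wallConfig N m i a b k = wallConfig N m i c d k) :
    wallConfig N m i a b = wallConfig N m i c d := by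
  have hi := i.isLt
  obtain ⟨rfl, rfl⟩ : a = c ∧ b = d := by
    by_cases hj : j = i.castLE (N.sub_le 1)
    · have := h ⟨N - 1, by omega⟩
        (by rw [hj]; exact Fin.ne_of_val_ne (show N - 1 ≠ (i : ℕ) by omega))
      rw [wallConfig_apply_of_eq_last rfl, wallConfig_apply_of_eq_last rfl, Prod.mk.injEq] at this
      exact this.symm
    · have := h _ (Ne.symm hj)
      rwa [wallConfig_apply_of_eq_wall rfl, wallConfig_apply_of_eq_wall rfl, Prod.mk.injEq] at this
  rfl

theorem wall_eq_of_agree_off_site (hab : a ≠ b) (hcd : c ≠ d)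
    (h : ∀ k ≠ j, wallConfig N m i a b k = wallConfig N m i' c d k) : i = i' := by
  by_contra hii
  by_cases hj : j = i.castLE (N.sub_le 1)
  · refine wallConfig_apply_wall_ne hcd (Ne.symm hii) (h _ ?_).symm
    rw [hj]
    exact fun e => hii (Fin.castLE_injective _ e).symm
  · exact wallConfig_apply_wall_ne hab hii (h _ (Ne.symm hj))

theorem wallConfig_eq_of_agree_off_site
    (h : ∀ k ≠ j, wallConfig N m i a b k = wallConfig N m i' c d k) :
    wallConfig N m i a b = wallConfig N m i' c d := by
  rcases eq_or_ne a b with rfl | hab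
  · have e : wallConfig N m i a a = wallConfig N m i' a a := by
      rw [wallConfig_self, wallConfig_self]
    rw [e] at h ⊢
    exact wallConfig_eq_of_agree_off_site_same_wall h
  rcases eq_or_ne c d with rfl | hcd
  · have e : wallConfig N m i' c c = wallConfig N m i c c := by
      rw [wallConfig_self, wallConfig_self]
    rw [e] at h ⊢
    exact wallConfig_eq_of_agree_off_site_same_wall h
  obtain rfl := wall_eq_of_agree_off_site hab hcd h
  exact wallConfig_eq_of_agree_off_site_same_wall h

theorem twoDomain_injOn_restrict (hN : 2 ≤ N) (j : Fin N) :
    Set.InjOn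
      (fun σ k => σ k.1 : (Fin N → Fin m × Fin m) → {k // k ≠ j} → Fin m × Fin m)
      (support (twoDomain N m)) := by
  intro σ hσ σ' hσ' h
  obtain ⟨i, a, b, rfl⟩ := (twoDomain_ne_zero_iff hN σ).1 hσ
  obtain ⟨i', c, d, rfl⟩ := (twoDomain_ne_zero_iff hN σ').1 hσ'
  exact wallConfig_eq_of_agree_off_site fun k hk => congrFun h ⟨k, hk⟩

theorem exists_twoDomain_ne_zero_apply_eq (hN : 2 ≤ N) (j : Fin N) (s : Fin m × Fin m) :
    ∃ σ, twoDomain N m σ ≠ 0 ∧ σ j = s := by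
  simp_rw [twoDomain_ne_zero_iff hN]
  by_cases hj : (j : ℕ) < N - 1
  · exact ⟨_, ⟨⟨j, hj⟩, s.1, s.2, rfl⟩, wallConfig_apply_of_eq_wall rfl⟩
  · exact ⟨_, ⟨⟨0, by omega⟩, s.2, s.1, rfl⟩, wallConfig_apply_of_eq_last (by omega)⟩

end TwoDomain

theorem twoDomainRDM_eq_amplitudeMatrix_mul_conjTranspose (N m : ℕ) (j : Fin N) :
    twoDomainRDM N m j =
      amplitudeMatrix (twoDomain N m) j * (amplitudeMatrix (twoDomain N m) j)ᴴ := by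
  have hglue (s : Fin m × Fin m) (σB : {k // k ≠ j} → Fin m × Fin m) :
      (fun k => if h : k = j then s else σB ⟨k, h⟩) = (Equiv.funSplitAt j _).symm (s, σB) :=
    funext fun k => (Equiv.funSplitAt_symm_apply j _ (s, σB) k).symm
  ext s s'
  simp only [twoDomainRDM, amplitudeMatrix, of_apply, mul_apply, conjTranspose_apply, hglue]
  rfl

theorem twoDomain_rdm_full_rank_general (N m : ℕ) (hN : 3 ≤ N) (j : Fin N) :
    (twoDomainRDM N m j).rank = m * m := by
  have hN2 : 2 ≤ N := by omega
  open scoped ComplexOrder in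
  rw [twoDomainRDM_eq_amplitudeMatrix_mul_conjTranspose,
    rank_amplitudeMatrix_mul_conjTranspose (twoDomain_injOn_restrict hN2 j)
      (exists_twoDomain_ne_zero_apply_eq hN2 j),
    Fintype.card_prod, Fintype.card_fin]

/-- For `N ≥ 3` and `m ≥ 2`, every single-site reduced density matrix of the two-domain
state has full rank `m²`. -/
theorem twoDomain_rdm_full_rank (N m : ℕ) (hN : 3 ≤ N) (hm : 2 ≤ m) (j : Fin N) :
    (twoDomainRDM N m j).rank = m * m :=
  twoDomain_rdm_full_rank_general N m hN j
end
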